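/- Let G be an n-vertex circle graph (n ≥ 1) with an isolated vertex u, let A, B ⊆ V(G) \ {u} be disjoint sets, and let F be the set of edges of G with one endpoint in A and the other in B. Then for any graph H on the same vertex set as G in which u is isolated, cz(H, H △ F) ≤ 2n - 2. -/

import Mathlib

variable {V : Type*}

open Classical in
/-- Local complementation at `v`: complement the induced subgraph on `N_G(v)`. -/
noncomputable def localComp (G : SimpleGraph V) (v : V) : SimpleGraph V where
  Adj x y := x ≠ y ∧ (if G.Adj v x ∧ G.Adj v y then ¬ G.Adj x y else G.Adj x y)
  symm := ⟨by
    intro x y ⟨hxy, h⟩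
    refine ⟨hxy.symm, ?_⟩
    by_cases hc : G.Adj v x ∧ G.Adj v y
    · rw [if_pos hc] at h
      rw [if_pos ⟨hc.2, hc.1⟩]
      exact fun h' => h h'.symm
    · rw [if_neg hc] at h
      rw [if_neg (fun h' => hc ⟨h'.2, h'.1⟩)]
      exact h.symm⟩
  loopless := ⟨fun x hx => hx.1 rfl⟩

/-- Toggle (add or remove) the edge `uv`. -/
def toggle (G : SimpleGraph V) (u v : V) : SimpleGraph V where
  Adj x y := x ≠ y ∧ Xor' (G.Adj x y) ((x = u ∧ y = v) ∨ (x = v ∧ y = u))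
  symm := ⟨by
    intro x y ⟨hxy, h⟩
    refine ⟨hxy.symm, ?_⟩
    rw [G.adj_comm y x]
    unfold Xor' at *
    rw [show ((y = u ∧ x = v) ∨ (y = v ∧ x = u)) ↔ ((x = u ∧ y = v) ∨ (x = v ∧ y = u)) by tauto]
    exact h⟩
  loopless := ⟨fun x hx => hx.1 rfl⟩

/-- Local equivalence: related by a sequence of local complementations. -/
def LocallyEquiv (G H : SimpleGraph V) : Prop :=
  Relation.ReflTransGen (fun A B => ∃ v, B = localComp A v) G H

/-- `CZle G H k` : there is a sequence `G = G₀, G₀', G₁, G₁', …, G_k, G_k' = H`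
with each `Gᵢ'` locally equivalent to `Gᵢ` and each `Gᵢ` (i ≥ 1) obtained from
`G_{i-1}'` by adding or removing a single edge. -/
inductive CZle : SimpleGraph V → SimpleGraph V → ℕ → Prop
  | base {G H : SimpleGraph V} : LocallyEquiv G H → CZle G H 0
  | step {G G' F H : SimpleGraph V} {k : ℕ} (u v : V) :
      LocallyEquiv G G' → u ≠ v → F = toggle G' u v → CZle F H k → CZle G H (k + 1)

/-- The CZ-distance between two graphs on the same vertex set. -/
noncomputable def czDist (G H : SimpleGraph V) : ℕ := sInf {k | CZle G H k}

/-- The CZ-distance of a graph: CZ-distance to the edgeless graph. -/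
noncomputable def cz (G : SimpleGraph V) : ℕ := czDist G ⊥

open Classical in
/-- Complementing on a vertex set `X`: replace the induced subgraph on `X` by its complement. -/
noncomputable def complOn (G : SimpleGraph V) (X : Set V) : SimpleGraph V :=
  SimpleGraph.fromRel (fun x y => if x ∈ X ∧ y ∈ X then ¬ G.Adj x y else G.Adj x y)

open Classical in
/-- The adjacency matrix over GF(2). -/
noncomputable def adjMat (G : SimpleGraph V) : Matrix V V (ZMod 2) :=
  fun x y => if G.Adj x y then 1 else 0

/-- `H` is a rank-`p` perturbation of `G`. -/
def IsRankPerturbation [Fintype V] (p : ℕ) (G H : SimpleGraph V) : Prop :=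
  ∃ M : Matrix V V (ZMod 2), M.IsSymm ∧ M.rank ≤ p ∧
    ∀ x y : V, x ≠ y → adjMat H x y = adjMat G x y + M x y

/-- `G` is a circle graph: the overlap graph of a family of closed intervals in `ℝ`
with pairwise distinct endpoints. -/
def IsCircleGraph (G : SimpleGraph V) : Prop :=
  ∃ l r : V → ℝ, (∀ v, l v < r v) ∧
    Function.Injective (fun p : V × Bool => if p.2 then r p.1 else l p.1) ∧
    ∀ x y, G.Adj x y ↔
      ((l x < l y ∧ l y < r x ∧ r x < r y) ∨ (l y < l x ∧ l x < r y ∧ r y < r x))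

/-- Two vertex sets are homogeneous: complete or anticomplete to each other. -/
def Homog (G : SimpleGraph V) (X Y : Finset V) : Prop :=
  (∀ x ∈ X, ∀ y ∈ Y, G.Adj x y) ∨ (∀ x ∈ X, ∀ y ∈ Y, ¬ G.Adj x y)

/-- Every part of the partition `P` has red degree (number of other parts it is
inhomogeneous to) at most `k`. -/
def RedDegLE [Fintype V] [DecidableEq V] (G : SimpleGraph V) (P : Finpartition (Finset.univ : Finset V))
    (k : ℕ) : Prop :=
  ∀ X ∈ P.parts, {Y : Finset V | Y ∈ P.parts ∧ Y ≠ X ∧ ¬ Homog G X Y}.ncard ≤ k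

/-- One contraction: merge two parts of the partition. -/
def MergeStep [Fintype V] [DecidableEq V]
    (P Q : Finpartition (Finset.univ : Finset V)) : Prop :=
  ∃ A B, A ∈ P.parts ∧ B ∈ P.parts ∧ A ≠ B ∧
    Q.parts = insert (A ∪ B) ((P.parts.erase A).erase B)

/-- `G` has twin-width at most `k`: there is a contraction (partition) sequence from
the discrete partition to the trivial one in which every partition has red degree at
most `k`. -/
def TwinWidthLE [Fintype V] [DecidableEq V] (G : SimpleGraph V) (k : ℕ) : Prop :=
  ∃ (m : ℕ) (seq : Fin (m + 1) → Finpartition (Finset.univ : Finset V)),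
    (∀ X ∈ (seq 0).parts, X.card = 1) ∧
    (seq (Fin.last m)).parts.card ≤ 1 ∧
    (∀ i : Fin m, MergeStep (seq i.castSucc) (seq i.succ)) ∧
    (∀ i, RedDegLE G (seq i) k)

/-- `H` is obtained from `G` (in which `u` is isolated) by adding all edges between `u`
and `N_G(v)`, possibly adding the edge `uv`, and then adding at most `k` additional
edges incident to `u`. -/
def ExtendStep (k : ℕ) (G H : SimpleGraph V) (u v : V) : Prop :=
  u ≠ v ∧ G.neighborSet u = ∅ ∧
  (∀ x y, x ≠ u → y ≠ u → (H.Adj x y ↔ G.Adj x y)) ∧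
  G.neighborSet v ⊆ H.neighborSet u ∧
  ∃ T : Finset V, T.card ≤ k ∧ H.neighborSet u ⊆ G.neighborSet v ∪ {v} ∪ ↑T

/-
Give each vertex of `A ∪ B` an interval of integer times: the endpoints of `A`-intervals are the
doubled ranks of the endpoints of its circle-graph interval, those of `B`-intervals are shifted by
one. Then two vertices have an odd number of common times exactly when one is in `A`, the other in
`B`, and their intervals cross. Sweep through time keeping `u` adjacent to the currently active
vertices: a free local complementation at `u` toggles all edges among the active vertices, and
updating the neighbourhood of `u` costs one toggle per vertex entering or leaving, hence at most
two toggles per vertex other than `u`. At the end every pair has been toggled once per common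
time, which turns `H` into `H △ F`.
-/

open Finset
open scoped symmDiff

theorem toggle_adj (G : SimpleGraph V) (u v x y : V) :
    (toggle G u v).Adj x y ↔ x ≠ y ∧ Xor (G.Adj x y) ((x = u ∧ y = v) ∨ (x = v ∧ y = u)) :=
  Iff.rfl

theorem CZle.of_locallyEquiv_left {G G' H : SimpleGraph V} {k : ℕ} (h : LocallyEquiv G G')
    (h' : CZle G' H k) : CZle G H k := by
  cases h' with
  | base h' => exact .base (h.trans h')
  | step a b h' hne hF h'' => exact .step a b (h.trans h') hne hF h''

theorem CZle.refl (G : SimpleGraph V) : CZle G G 0 := .base .refl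

theorem CZle.trans {G H K : SimpleGraph V} {k m : ℕ} (h : CZle G H k) (h' : CZle H K m) :
    CZle G K (k + m) := by
  induction h with
  | base h => simpa using h'.of_locallyEquiv_left h
  | step a b hG' hne hF _ ih => rw [Nat.add_right_comm]; exact .step a b hG' hne hF (ih h')

theorem CZle.localComp_right (G : SimpleGraph V) (v : V) : CZle G (localComp G v) 0 :=
  .base (.single ⟨v, rfl⟩)

theorem CZle.toggle_right (G : SimpleGraph V) {u v : V} (h : u ≠ v) : CZle G (toggle G u v) 1 :=
  .step u v .refl h rfl (.refl _)

theorem CZle.of_adj_iff_xor_star {P Q : SimpleGraph V} {u : V} {D : Finset V} (hu : u ∉ D)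
    (hQ : ∀ x y, Q.Adj x y ↔ x ≠ y ∧ Xor (P.Adj x y) ((x = u ∧ y ∈ D) ∨ (y = u ∧ x ∈ D))) :
    CZle P Q #D := by
  classical
  induction D using Finset.induction_on generalizing P with
  | empty =>
    obtain rfl : Q = P := by
      ext x y
      simpa [hQ, xor_def] using P.ne_of_adj
    exact .refl _
  | insert a D ha ih =>
    rw [mem_insert, not_or] at hu
    rw [card_insert_of_notMem ha, add_comm]
    refine (CZle.toggle_right P hu.1).trans (ih hu.2 fun x y => ?_)
    simp only [hQ, toggle_adj]
    grind

theorem localComp_adj (G : SimpleGraph V) (v x y : V) :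
    (localComp G v).Adj x y ↔ x ≠ y ∧ Xor (G.Adj x y) (G.Adj v x ∧ G.Adj v y) := by
  simp only [localComp]
  split_ifs <;> grind [G.ne_of_adj]

theorem localComp_adj_left (G : SimpleGraph V) (v z : V) :
    (localComp G v).Adj v z ↔ G.Adj v z := by
  grind [localComp_adj, G.ne_of_adj, G.loopless]

section Sweep

variable [DecidableEq V] (H : SimpleGraph V) (u : V) (act : ℕ → Finset V)

def coactivity (i : ℕ) (x y : V) : ℕ := #{j ∈ range i | x ∈ act j ∧ y ∈ act j}

theorem coactivity_comm (i : ℕ) (x y : V) : coactivity act i x y = coactivity act i y x := by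
  simp only [coactivity, and_comm]

theorem odd_coactivity_succ (i : ℕ) (x y : V) :
    Odd (coactivity act (i + 1) x y) ↔
      Xor (Odd (coactivity act i x y)) (x ∈ act i ∧ y ∈ act i) := by
  rw [coactivity, range_add_one, filter_insert]
  split_ifs with h
  · rw [card_insert_of_notMem (by simp), Nat.odd_add_one]; grind [coactivity]
  · grind [coactivity]

def sweepGraph (i : ℕ) : SimpleGraph V where
  Adj x y := x ≠ y ∧ ((x = u ∧ y ∈ act i) ∨ (y = u ∧ x ∈ act i) ∨
    (x ≠ u ∧ y ≠ u ∧ Xor (H.Adj x y) (Odd (coactivity act i x y))))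
  symm := ⟨fun x y h => by grind [coactivity_comm, H.adj_comm]⟩
  loopless := ⟨fun _ h => h.1 rfl⟩

variable {H u act}

theorem sweepGraph_adj_left {i : ℕ} (hu : u ∉ act i) (z : V) :
    (sweepGraph H u act i).Adj u z ↔ z ∈ act i := by
  simp only [sweepGraph]
  grind

theorem sweepGraph_adj_of_ne {i : ℕ} {x y : V} (hx : x ≠ u) (hy : y ≠ u) :
    (sweepGraph H u act i).Adj x y ↔ x ≠ y ∧ Xor (H.Adj x y) (Odd (coactivity act i x y)) := by
  simp only [sweepGraph]
  grind

theorem sweepGraph_succ_adj {i : ℕ} (hu : u ∉ act i) (hu' : u ∉ act (i + 1)) (x y : V) :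
    (sweepGraph H u act (i + 1)).Adj x y ↔ x ≠ y ∧
      Xor ((localComp (sweepGraph H u act i) u).Adj x y)
        ((x = u ∧ y ∈ act i ∆ act (i + 1)) ∨ (y = u ∧ x ∈ act i ∆ act (i + 1))) := by
  rcases eq_or_ne x u with rfl | hx
  · simp only [sweepGraph_adj_left hu', localComp_adj_left, sweepGraph_adj_left hu, mem_symmDiff]
    grind
  rcases eq_or_ne y u with rfl | hy
  · simp only [(sweepGraph _ _ _ _).adj_comm x, sweepGraph_adj_left hu',
      (localComp _ _).adj_comm x, localComp_adj_left, sweepGraph_adj_left hu, mem_symmDiff]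
    grind
  simp only [sweepGraph_adj_of_ne hx hy, localComp_adj, sweepGraph_adj_left hu,
    odd_coactivity_succ]
  grind

theorem CZle.sweepGraph_succ {i : ℕ} (hu : u ∉ act i) (hu' : u ∉ act (i + 1)) :
    CZle (sweepGraph H u act i) (sweepGraph H u act (i + 1)) #(act i ∆ act (i + 1)) := by
  simpa using (CZle.localComp_right _ u).trans
    (CZle.of_adj_iff_xor_star (by simp [mem_symmDiff, hu, hu']) (sweepGraph_succ_adj hu hu'))

theorem CZle.sweepGraph (hu : ∀ j, u ∉ act j) (M : ℕ) :
    CZle (sweepGraph H u act 0) (sweepGraph H u act M)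
      (∑ j ∈ range M, #(act j ∆ act (j + 1))) := by
  induction M with
  | zero => exact .refl _
  | succ M ih => rw [sum_range_succ]; exact ih.trans (.sweepGraph_succ (hu M) (hu (M + 1)))

theorem sweepGraph_zero (hH : ∀ z, ¬ H.Adj u z) (h0 : act 0 = ∅) : sweepGraph H u act 0 = H := by
  ext x y
  rcases eq_or_ne x u with rfl | hx
  · simp [sweepGraph_adj_left, h0, hH]
  rcases eq_or_ne y u with rfl | hy
  · simp [SimpleGraph.adj_comm _ x, sweepGraph_adj_left, h0, hH]
  simpa [sweepGraph_adj_of_ne hx hy, coactivity, xor_def] using H.ne_of_adj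

theorem sweepGraph_eq_fromRel (hH : ∀ z, ¬ H.Adj u z) (hu : ∀ j, u ∉ act j) {M : ℕ}
    (hM : act M = ∅) :
    sweepGraph H u act M =
      SimpleGraph.fromRel fun x y => Xor (H.Adj x y) (Odd (coactivity act M x y)) := by
  have hc : ∀ z, coactivity act M u z = 0 := by simp [coactivity, hu]
  ext x y
  rcases eq_or_ne x u with rfl | hx
  · simp [sweepGraph_adj_left (hu M), hM, hH, hc, coactivity_comm act M y, H.adj_comm y]
  rcases eq_or_ne y u with rfl | hy
  · simp [SimpleGraph.adj_comm _ x, sweepGraph_adj_left (hu M), hM, hH, hc,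
      coactivity_comm act M x]
  simp [sweepGraph_adj_of_ne hx hy, H.adj_comm y, coactivity_comm act M y]

end Sweep

section Intervals

variable [Fintype V] (s t : V → ℕ)

def intervalAct (j : ℕ) : Finset V := {v | j ∈ Ico (s v) (t v)}

theorem coactivity_intervalAct [DecidableEq V] {M : ℕ} (hM : ∀ v, t v ≤ M) (x y : V) :
    coactivity (intervalAct s t) M x y = #(Ico (s x) (t x) ∩ Ico (s y) (t y)) := by
  rw [coactivity]
  congr 1
  ext j
  simp only [intervalAct, mem_filter, mem_univ, true_and, mem_range, mem_inter, mem_Ico]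
  have := hM x
  omega

theorem card_filter_mem_symmDiff_intervalAct_le [DecidableEq V] (M : ℕ) (v : V) :
    #{j ∈ range M | v ∈ intervalAct s t j ∆ intervalAct s t (j + 1)} ≤
      if s v < t v then 2 else 0 := by
  simp only [intervalAct, mem_symmDiff, mem_filter, mem_univ, true_and, mem_Ico]
  split_ifs with h
  · refine (card_le_card (t := {s v - 1, t v - 1}) fun j hj => ?_).trans card_le_two
    simp only [mem_filter, mem_insert, mem_singleton] at hj ⊢
    omega
  · simp only [Nat.le_zero, card_eq_zero, filter_eq_empty_iff]
    omega

theorem sum_card_symmDiff_intervalAct_le [DecidableEq V] (M : ℕ) :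
    ∑ j ∈ range M, #(intervalAct s t j ∆ intervalAct s t (j + 1)) ≤ 2 * #{v | s v < t v} :=
  calc ∑ j ∈ range M, #(intervalAct s t j ∆ intervalAct s t (j + 1))
      = ∑ v, #{j ∈ range M | v ∈ intervalAct s t j ∆ intervalAct s t (j + 1)} := by
        simp only [card_eq_sum_ones]
        exact sum_comm' (by simp)
    _ ≤ ∑ v, if s v < t v then 2 else 0 :=
        sum_le_sum fun v _ => card_filter_mem_symmDiff_intervalAct_le s t M v
    _ = 2 * #{v | s v < t v} := by
        rw [sum_ite, sum_const, sum_const_zero, smul_eq_mul, mul_comm]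
        rfl

theorem notMem_intervalAct {v : V} (h : t v ≤ s v) (j : ℕ) : v ∉ intervalAct s t j := by
  simp only [intervalAct, mem_filter, mem_univ, true_and, mem_Ico]
  omega

theorem intervalAct_eq_empty {j : ℕ} (h : ∀ v, j < s v ∨ t v ≤ j) :
    intervalAct s t j = ∅ := by
  ext v
  simp only [intervalAct, mem_filter, mem_univ, true_and, mem_Ico, notMem_empty, iff_false]
  have := h v
  omega

theorem czDist_fromRel_xor_odd_card_Ico_inter_le {H : SimpleGraph V} {u : V}
    (hH : ∀ z, ¬H.Adj u z) (hs : ∀ v, 0 < s v) (hu : t u ≤ s u) :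
    czDist H (SimpleGraph.fromRel fun x y =>
      Xor (H.Adj x y) (Odd #(Ico (s x) (t x) ∩ Ico (s y) (t y)))) ≤ 2 * #{v | s v < t v} := by
  classical
  let M := univ.sup t
  have hM (v : V) : t v ≤ M := le_sup (mem_univ v)
  have hact := notMem_intervalAct s t hu
  have hsweep := CZle.sweepGraph (H := H) hact M
  rw [sweepGraph_zero hH (intervalAct_eq_empty s t fun v => .inl (hs v)),
    sweepGraph_eq_fromRel hH hact (intervalAct_eq_empty s t fun v => .inr (hM v))] at hsweep
  simp only [coactivity_intervalAct s t hM] at hsweep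
  exact (Nat.sInf_le hsweep).trans (sum_card_symmDiff_intervalAct_le s t M)

end Intervals

theorem exists_nat_lt_iff_lt {ι α : Type*} [Fintype ι] [LinearOrder α] (f : ι → α) :
    ∃ R : ι → ℕ, ∀ i j, R i < R j ↔ f i < f j := by
  classical
  refine ⟨fun i => #{k | f k < f i}, fun i j => ⟨fun h => ?_, fun h => ?_⟩⟩
  · by_contra! hji
    exact h.not_ge (card_le_card (monotone_filter_right _ fun _ _ hk => hk.trans_le hji))
  · refine card_lt_card ((ssubset_iff_of_subset ?_).2 ⟨i, by simpa using h, by simp⟩)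
    exact monotone_filter_right _ fun _ _ hk => hk.trans h

theorem odd_card_Ico_inter_Ico_iff {p q p' q' σ σ' : ℕ} (hσ : σ = 1 ∨ σ = 2)
    (hσ' : σ' = 1 ∨ σ' = 2) (hpp' : p ≠ p') (hpq' : p ≠ q') (hqp' : q ≠ p') (hqq' : q ≠ q') :
    Odd #(Ico (2 * p + σ) (2 * q + σ) ∩ Ico (2 * p' + σ') (2 * q' + σ')) ↔
      σ ≠ σ' ∧ ((p < p' ∧ p' < q ∧ q < q') ∨ (p' < p ∧ p < q' ∧ q' < q)) := by
  rw [Ico_inter_Ico, Nat.card_Ico, Nat.odd_iff]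
  omega

theorem IsCircleGraph.exists_parity_intervals [Fintype V] {G : SimpleGraph V}
    (hG : IsCircleGraph G) {A B : Set V} (hAB : Disjoint A B) :
    ∃ s t : V → ℕ, (∀ v, 0 < s v) ∧ (∀ v, v ∉ A → v ∉ B → t v ≤ s v) ∧
      ∀ x y, x ≠ y → (Odd #(Ico (s x) (t x) ∩ Ico (s y) (t y)) ↔
        G.Adj x y ∧ ((x ∈ A ∧ y ∈ B) ∨ (x ∈ B ∧ y ∈ A))) := by
  classical
  obtain ⟨l, r, -, hinj, hadj⟩ := hG
  obtain ⟨R, hR⟩ := exists_nat_lt_iff_lt fun p : V × Bool => if p.2 then r p.1 else l p.1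
  have hRinj : Function.Injective R := fun p q h =>
    hinj (le_antisymm (not_lt.1 ((hR q p).not.1 h.not_gt)) (not_lt.1 ((hR p q).not.1 h.not_lt)))
  have hll (x y : V) : l x < l y ↔ R (x, false) < R (y, false) :=
    (hR (x, false) (y, false)).symm
  have hlr (x y : V) : l x < r y ↔ R (x, false) < R (y, true) :=
    (hR (x, false) (y, true)).symm
  have hrr (x y : V) : r x < r y ↔ R (x, true) < R (y, true) :=
    (hR (x, true) (y, true)).symm
  simp only [hll, hlr, hrr] at hadj
  let σ (v : V) : ℕ := if v ∈ A then 2 else 1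
  refine ⟨fun v => if v ∈ A ∪ B then 2 * R (v, false) + σ v else 1,
    fun v => if v ∈ A ∪ B then 2 * R (v, true) + σ v else 1, fun v => ?_, fun v hA hB => ?_,
    fun x y hxy => ?_⟩
  · dsimp only [σ]
    split_ifs <;> omega
  · simp [hA, hB]
  by_cases hx : x ∈ A ∪ B
  · by_cases hy : y ∈ A ∪ B
    · have hR' (b b' : Bool) : R (x, b) ≠ R (y, b') := fun h =>
        hxy (congrArg Prod.fst (hRinj h))
      simp only [hx, hy, if_true]
      rw [odd_card_Ico_inter_Ico_iff (by grind) (by grind) (hR' _ _) (hR' _ _) (hR' _ _) (hR' _ _),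
        hadj]
      grind
    · simp only [hy, if_false, Ico_self, inter_empty, card_empty, Nat.not_odd_zero, false_iff]
      grind
  · simp only [hx, if_false, Ico_self, empty_inter, card_empty, Nat.not_odd_zero, false_iff]
    grind

theorem stmt14_general [Fintype V] (G : SimpleGraph V) (n : ℕ) (hn : Fintype.card V = n)
    (hG : IsCircleGraph G) (u : V)
    (A B : Set V) (hA : u ∉ A) (hB : u ∉ B) (hAB : Disjoint A B)
    (H : SimpleGraph V) (huH : H.neighborSet u = ∅) :
    czDist H (SimpleGraph.fromRel (fun x y =>
      Xor' (H.Adj x y) (G.Adj x y ∧ ((x ∈ A ∧ y ∈ B) ∨ (x ∈ B ∧ y ∈ A)))))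
      ≤ 2 * n - 2 := by
  obtain ⟨s, t, hs, hst, hodd⟩ := hG.exists_parity_intervals hAB
  have hH : ∀ z, ¬H.Adj u z := by simpa [Set.eq_empty_iff_forall_notMem] using huH
  have htarget : (SimpleGraph.fromRel fun x y =>
      Xor (H.Adj x y) (Odd #(Ico (s x) (t x) ∩ Ico (s y) (t y)))) =
      SimpleGraph.fromRel fun x y =>
        Xor (H.Adj x y) (G.Adj x y ∧ ((x ∈ A ∧ y ∈ B) ∨ (x ∈ B ∧ y ∈ A))) := by
    ext x y
    simp only [SimpleGraph.fromRel_adj]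
    exact and_congr_right fun hxy => or_congr (by rw [hodd x y hxy]) (by rw [hodd y x hxy.symm])
  have hcard : #{v | s v < t v} < n :=
    hn ▸ card_lt_card (filter_ssubset.2 ⟨u, mem_univ u, (hst u hA hB).not_gt⟩)
  calc _ ≤ 2 * #{v | s v < t v} :=
        htarget ▸ czDist_fromRel_xor_odd_card_Ico_inter_le s t hH hs (hst u hA hB)
    _ ≤ 2 * n - 2 := by omega

theorem stmt14 [Fintype V] (G : SimpleGraph V) (n : ℕ) (hn : Fintype.card V = n)
    (h1 : 1 ≤ n) (hG : IsCircleGraph G) (u : V) (hu : G.neighborSet u = ∅)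
    (A B : Set V) (hA : u ∉ A) (hB : u ∉ B) (hAB : Disjoint A B)
    (H : SimpleGraph V) (huH : H.neighborSet u = ∅) :
    czDist H (SimpleGraph.fromRel (fun x y =>
      Xor' (H.Adj x y) (G.Adj x y ∧ ((x ∈ A ∧ y ∈ B) ∨ (x ∈ B ∧ y ∈ A)))))
      ≤ 2 * n - 2 :=
  stmt14_general G n hn hG u A B hA hB hAB H huH
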